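/- Let N ≥ 2, R > 0, and let u : B_R → (0,∞) be continuous and separable in B_R. Suppose u is not radially symmetric with respect to the origin, i.e., there exist x, y ∈ B_R with |x| = |y| and u(x) ≠ u(y). Then there exists a linear isometry M ∈ O(N) such that, writing u_M(x) = u(M⁻¹x): (i) for every α ∈ (0,R] and every h ∈ [−α,α], u_M is constant on the set {x ∈ ℝ^N : |x| = α and x_N = h} (u_M is axially symmetric with respect to the x_N-axis); (ii) for every α ∈ (0,R], the function θ ↦ u_M(0,…,0, α cos θ, α sin θ) is nonincreasing for θ ∈ [π/2, 3π/2]. -/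

import Mathlib

open scoped RealInnerProductSpace
open MeasureTheory Metric

/-- The point `(0,…,0, cos θ, sin θ)` of `ℝ^N`. -/
noncomputable def circlePoint (N : ℕ) (θ : ℝ) : EuclideanSpace ℝ (Fin N) :=
  (EuclideanSpace.equiv (Fin N) ℝ).symm fun i =>
    if (i : ℕ) = N - 2 then Real.cos θ else if (i : ℕ) = N - 1 then Real.sin θ else 0

/-- The reflection of `ℝ^N` across the hyperplane `{x : ⟪a,x⟫ = 0}` through the
origin, bounding the open half-space `H = {x : ⟪a,x⟫ > 0}`. -/
noncomputable def reflectHyp0 {E : Type*} [NormedAddCommGroup E] [InnerProductSpace ℝ E]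
    (a : E) (x : E) : E :=
  x - ((2 * ⟪a, x⟫) / ⟪a, a⟫) • a

section Reflect
variable {E : Type*} [NormedAddCommGroup E] [InnerProductSpace ℝ E]

lemma reflect_inner_left (a x : E) (ha : a ≠ 0) : ⟪a, reflectHyp0 a x⟫ = -⟪a, x⟫ := by
  have h : ⟪a, a⟫ ≠ (0:ℝ) := inner_self_ne_zero.2 ha
  simp only [reflectHyp0, inner_sub_right, real_inner_smul_right]
  field_simp
  ring

lemma reflect_eq_self {a x : E} (h : ⟪a, x⟫ = 0) : reflectHyp0 a x = x := by
  simp [reflectHyp0, h]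

lemma reflect_involutive (a x : E) (ha : a ≠ 0) :
    reflectHyp0 a (reflectHyp0 a x) = x := by
  have h : ⟪a, a⟫ ≠ (0:ℝ) := inner_self_ne_zero.2 ha
  have h1 := reflect_inner_left a x ha
  simp only [reflectHyp0] at h1 ⊢
  rw [h1]
  simp only [mul_neg, neg_div, neg_smul, sub_neg_eq_add, sub_add_cancel]

lemma reflect_inner_self (a x : E) : ⟪reflectHyp0 a x, reflectHyp0 a x⟫ = ⟪x, x⟫ := by
  rcases eq_or_ne a 0 with rfl | ha
  · simp [reflectHyp0]
  have h : ⟪a, a⟫ ≠ (0:ℝ) := inner_self_ne_zero.2 ha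
  simp only [reflectHyp0, inner_sub_sub_self, real_inner_smul_left, real_inner_smul_right]
  have hc : ⟪x, a⟫ = ⟪a, x⟫ := real_inner_comm a x
  field_simp [hc]
  rw [hc]; ring

lemma reflect_norm (a x : E) : ‖reflectHyp0 a x‖ = ‖x‖ := by
  have := reflect_inner_self a x
  rw [real_inner_self_eq_norm_sq, real_inner_self_eq_norm_sq] at this
  nlinarith [norm_nonneg (reflectHyp0 a x), norm_nonneg x]

lemma reflect_neg (a : E) : reflectHyp0 (-a) = reflectHyp0 a := by
  funext x
  simp only [reflectHyp0, inner_neg_left, inner_neg_right, neg_neg, smul_neg, mul_neg, neg_div,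
    neg_smul]

lemma reflect_map_of_norm_eq {x y : E} (h : ‖x‖ = ‖y‖) (hxy : x ≠ y) :
    reflectHyp0 (x - y) x = y := by
  have ha : x - y ≠ 0 := sub_ne_zero.2 hxy
  have hxx : ⟪x, x⟫ = ⟪y, y⟫ := by
    rw [real_inner_self_eq_norm_sq, real_inner_self_eq_norm_sq, h]
  have h2 : ⟪x - y, x - y⟫ = 2 * ⟪x - y, x⟫ := by
    simp only [inner_sub_left, inner_sub_right]
    linarith [real_inner_comm y x, hxx]
  have h3 : ⟪x - y, x - y⟫ ≠ (0:ℝ) := inner_self_ne_zero.2 ha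
  simp only [reflectHyp0]
  rw [← h2, div_self h3, one_smul]
  abel

lemma reflect_inner_pos {x y : E} (h : ‖x‖ = ‖y‖) (hxy : x ≠ y) : 0 < ⟪x - y, x⟫ := by
  have ha : x - y ≠ 0 := sub_ne_zero.2 hxy
  have hxx : ⟪x, x⟫ = ⟪y, y⟫ := by
    rw [real_inner_self_eq_norm_sq, real_inner_self_eq_norm_sq, h]
  have h2 : ⟪x - y, x - y⟫ = 2 * ⟪x - y, x⟫ := by
    simp only [inner_sub_left, inner_sub_right]
    linarith [real_inner_comm y x, hxx]
  have h3 : (0:ℝ) < ⟪x - y, x - y⟫ := by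
    rw [real_inner_self_eq_norm_sq]
    exact pow_pos (norm_pos_iff.2 ha) 2
  linarith

lemma reflect_continuous (a : E) : Continuous (reflectHyp0 a) := by
  have h1 : Continuous fun x : E => ⟪a, x⟫ := Continuous.inner continuous_const continuous_id
  exact continuous_id.sub (((continuous_const.mul h1).div_const _).smul continuous_const)

noncomputable def reflectLIE (a : E) (ha : a ≠ 0) : E ≃ₗᵢ[ℝ] E :=
  { toFun := reflectHyp0 a
    invFun := reflectHyp0 a
    left_inv := fun x => reflect_involutive a x ha
    right_inv := fun x => reflect_involutive a x ha
    map_add' := fun x y => by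
      have h : ⟪a, a⟫ ≠ (0:ℝ) := inner_self_ne_zero.2 ha
      simp only [reflectHyp0, inner_add_right]
      rw [show (2 * (⟪a, x⟫ + ⟪a, y⟫)) / ⟪a, a⟫
          = 2 * ⟪a, x⟫ / ⟪a, a⟫ + 2 * ⟪a, y⟫ / ⟪a, a⟫ by ring, add_smul]
      abel
    map_smul' := fun c x => by
      simp only [reflectHyp0, inner_smul_right, RingHom.id_apply, smul_sub]
      rw [show (2 * (c * ⟪a, x⟫)) / ⟪a, a⟫ = c * (2 * ⟪a, x⟫ / ⟪a, a⟫) by ring, mul_smul]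
    norm_map' := fun x => reflect_norm a x }

lemma reflectLIE_symm_apply (a : E) (ha : a ≠ 0) (x : E) :
    (reflectLIE a ha).symm x = reflectHyp0 a x := rfl

@[simp] lemma reflectLIE_apply (a : E) (ha : a ≠ 0) (x : E) :
    reflectLIE a ha x = reflectHyp0 a x := rfl

end Reflect

section Circle

variable {N : ℕ}

lemma circlePoint_eq (hN : 2 ≤ N) (θ : ℝ) :
    circlePoint N θ = Real.cos θ • EuclideanSpace.single (⟨N - 2, by omega⟩ : Fin N) (1:ℝ)
      + Real.sin θ • EuclideanSpace.single (⟨N - 1, (Nat.sub_lt (Nat.lt_of_lt_of_le Nat.zero_lt_two hN) Nat.one_pos)⟩ : Fin N) (1:ℝ) := by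
  ext i
  simp only [circlePoint, EuclideanSpace.equiv, LinearEquiv.coe_symm_mk,
    PiLp.add_apply, PiLp.smul_apply, EuclideanSpace.single_apply, smul_eq_mul]
  by_cases h0 : (i : ℕ) = N - 2
  · have h1 : ¬ (i : ℕ) = N - 1 := by omega
    have hi0 : i = (⟨N - 2, by omega⟩ : Fin N) := Fin.ext h0
    have hi1 : i ≠ (⟨N - 1, by omega⟩ : Fin N) := by
      intro hc; exact h1 (by rw [hc])
    have hne2 : ¬ (N - 2 = N - 1) := by omega
    simp [h0, h1, hi0, if_neg hi1, hne2]
  · by_cases h1 : (i : ℕ) = N - 1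
    · have hi1 : i = (⟨N - 1, by omega⟩ : Fin N) := Fin.ext h1
      have hi0 : i ≠ (⟨N - 2, by omega⟩ : Fin N) := by
        intro hc
        apply h0; rw [hc]
      have hne2 : ¬ (N - 1 = N - 2) := by omega
      simp [h0, h1, hi1, if_neg hi0, hne2]
    · have hi0 : i ≠ (⟨N - 2, by omega⟩ : Fin N) := fun hc => h0 (by rw [hc])
      have hi1 : i ≠ (⟨N - 1, by omega⟩ : Fin N) := fun hc => h1 (by rw [hc])
      simp [h0, h1, if_neg hi0, if_neg hi1]

lemma inner_single_circlePoint (hN : 2 ≤ N) (θ : ℝ) :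
    ⟪EuclideanSpace.single (⟨N - 1, (Nat.sub_lt (Nat.lt_of_lt_of_le Nat.zero_lt_two hN) Nat.one_pos)⟩ : Fin N) (1:ℝ), circlePoint N θ⟫
      = Real.sin θ := by
  rw [EuclideanSpace.inner_single_left]
  simp only [circlePoint, EuclideanSpace.equiv, LinearEquiv.coe_symm_mk, map_one, one_mul]
  have h0 : ¬ (N - 1 : ℕ) = N - 2 := by omega
  simp [h0]

lemma norm_circlePoint (hN : 2 ≤ N) (θ : ℝ) : ‖circlePoint N θ‖ = 1 := by
  have hne : (⟨N - 2, by omega⟩ : Fin N) ≠ (⟨N - 1, by omega⟩ : Fin N) := by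
    intro hc
    have := Fin.mk.injEq (N-2) (by omega : N - 2 < N) (N-1) (by omega : N - 1 < N) ▸ hc
    simp only [Fin.mk.injEq] at hc
    omega
  have hinner : ⟪circlePoint N θ, circlePoint N θ⟫ = 1 := by
    rw [circlePoint_eq hN]
    simp only [inner_add_left, inner_add_right, real_inner_smul_left, real_inner_smul_right,
      EuclideanSpace.inner_single_left, EuclideanSpace.single_apply, map_one, one_mul]
    simp [hne, Ne.symm hne]
    nlinarith [Real.sin_sq_add_cos_sq θ]
  have h := real_inner_self_eq_norm_sq (circlePoint N θ)
  rw [hinner] at h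
  nlinarith [norm_nonneg (circlePoint N θ)]

end Circle

section Key

variable {N : ℕ} {R : ℝ} {u : EuclideanSpace ℝ (Fin N) → ℝ}

lemma key_lemma (hR : 0 < R)
    (hcont : ContinuousOn u (Metric.closedBall (0 : EuclideanSpace ℝ (Fin N)) R))
    (hsep : ∀ a : EuclideanSpace ℝ (Fin N), a ≠ 0 →
      (∀ x ∈ Metric.closedBall (0 : EuclideanSpace ℝ (Fin N)) R,
        0 < ⟪a, x⟫ → u (reflectHyp0 a x) ≤ u x) ∨
      (∀ x ∈ Metric.closedBall (0 : EuclideanSpace ℝ (Fin N)) R,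
        0 < ⟪a, x⟫ → u x ≤ u (reflectHyp0 a x)))
    {a : EuclideanSpace ℝ (Fin N)} (ha : a ≠ 0)
    (hm : 0 ≤ ⟪a, ∫ x in Metric.closedBall (0 : EuclideanSpace ℝ (Fin N)) R, u x • x⟫)
    {x : EuclideanSpace ℝ (Fin N)} (hx : x ∈ Metric.closedBall (0 : EuclideanSpace ℝ (Fin N)) R)
    (hax : 0 < ⟪a, x⟫) :
    u (reflectHyp0 a x) ≤ u x := by
  rcases hsep a ha with h1 | h2
  · exact h1 x hx hax
  set D : Set (EuclideanSpace ℝ (Fin N)) := Metric.closedBall 0 R with hD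
  set σ : EuclideanSpace ℝ (Fin N) → EuclideanSpace ℝ (Fin N) := reflectHyp0 a with hσ
  set g : EuclideanSpace ℝ (Fin N) → ℝ := fun y => (u y - u (σ y)) * ⟪a, y⟫ with hg
  have hDc : IsCompact D := isCompact_closedBall _ _
  have hDm : MeasurableSet D := measurableSet_closedBall
  have hσD : ∀ y ∈ D, σ y ∈ D := by
    intro y hy
    rw [hD, mem_closedBall_zero_iff] at hy ⊢
    rw [hσ, reflect_norm]; exact hy
  have hinner_cont : Continuous fun y : EuclideanSpace ℝ (Fin N) => ⟪a, y⟫ :=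
    Continuous.inner continuous_const continuous_id
  have hucσ : ContinuousOn (fun y => u (σ y)) D :=
    hcont.comp (reflect_continuous a).continuousOn hσD
  have hcg : ContinuousOn g D := (hcont.sub hucσ).mul hinner_cont.continuousOn
  have hint_f : IntegrableOn (fun y => u y * ⟪a, y⟫) D :=
    (hcont.mul hinner_cont.continuousOn).integrableOn_compact hDc
  have hint_fσ : IntegrableOn (fun y => -(u (σ y) * ⟪a, y⟫)) D :=
    ((hucσ.mul hinner_cont.continuousOn).integrableOn_compact hDc).neg
  have hint_g : IntegrableOn g D := hcg.integrableOn_compact hDc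
  set A : Set (EuclideanSpace ℝ (Fin N)) := D ∩ {y | 0 < ⟪a, y⟫} with hA
  set B : Set (EuclideanSpace ℝ (Fin N)) := D ∩ {y | ⟪a, y⟫ < 0} with hB
  have hAm : MeasurableSet A := hDm.inter (isOpen_lt continuous_const hinner_cont).measurableSet
  have hBm : MeasurableSet B := hDm.inter (isOpen_lt hinner_cont continuous_const).measurableSet
  have hZ : (MeasureTheory.volume : Measure (EuclideanSpace ℝ (Fin N)))
      {y : EuclideanSpace ℝ (Fin N) | ⟪a, y⟫ = 0} = 0 := by
    have hset : {y : EuclideanSpace ℝ (Fin N) | ⟪a, y⟫ = 0}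
        = ((ℝ ∙ a)ᗮ : Submodule ℝ (EuclideanSpace ℝ (Fin N))) := by
      ext y
      simp only [Set.mem_setOf_eq, SetLike.mem_coe,
        Submodule.mem_orthogonal_singleton_iff_inner_left]
      rw [real_inner_comm]
    rw [hset]
    apply Measure.addHaar_submodule
    intro htop
    have hmem : a ∈ (ℝ ∙ a)ᗮ := htop ▸ Submodule.mem_top
    rw [Submodule.mem_orthogonal_singleton_iff_inner_left] at hmem
    exact inner_self_ne_zero.2 ha hmem
  -- main identity
  have key_eq : ⟪a, ∫ y in D, u y • y⟫ = ∫ y in A, g y := by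
    have hint_m : IntegrableOn (fun y : EuclideanSpace ℝ (Fin N) => u y • y) D :=
      (hcont.smul continuousOn_id).integrableOn_compact hDc
    have e1 : ⟪a, ∫ y in D, u y • y⟫ = ∫ y in D, u y * ⟪a, y⟫ := by
      rw [← integral_inner hint_m a]
      congr 1
      funext y
      rw [real_inner_smul_right]
    have hAB : (A ∪ B : Set (EuclideanSpace ℝ (Fin N))) =ᵐ[MeasureTheory.volume] (D : Set (EuclideanSpace ℝ (Fin N))) := by
      apply MeasureTheory.ae_eq_of_subset_of_measure_ge
      · exact Set.union_subset Set.inter_subset_left Set.inter_subset_left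
      · have hsub : D ⊆ (A ∪ B) ∪ {y : EuclideanSpace ℝ (Fin N) | ⟪a, y⟫ = 0} := by
          intro y hy
          rcases lt_trichotomy (⟪a, y⟫ : ℝ) 0 with h | h | h
          · exact Or.inl (Or.inr ⟨hy, h⟩)
          · exact Or.inr h
          · exact Or.inl (Or.inl ⟨hy, h⟩)
        calc MeasureTheory.volume D
            ≤ MeasureTheory.volume ((A ∪ B) ∪ {y : EuclideanSpace ℝ (Fin N) | ⟪a, y⟫ = 0}) :=
              measure_mono hsub
          _ ≤ MeasureTheory.volume (A ∪ B)
              + MeasureTheory.volume {y : EuclideanSpace ℝ (Fin N) | ⟪a, y⟫ = 0} :=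
              measure_union_le _ _
          _ = MeasureTheory.volume (A ∪ B) := by rw [hZ, add_zero]
      · exact (hAm.union hBm).nullMeasurableSet
      · exact hDc.measure_lt_top.ne
    have e2 : ∫ y in D, u y * ⟪a, y⟫ = (∫ y in A, u y * ⟪a, y⟫) + ∫ y in B, u y * ⟪a, y⟫ := by
      rw [← setIntegral_congr_set hAB]
      refine setIntegral_union ?_ hBm (hint_f.mono_set Set.inter_subset_left)
        (hint_f.mono_set Set.inter_subset_left)
      rw [Set.disjoint_left]
      rintro y ⟨-, hy1⟩ ⟨-, hy2⟩
      simp only [Set.mem_setOf_eq] at hy1 hy2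
      linarith
    have hco : ⇑(reflectLIE a ha) = σ := funext fun z => reflectLIE_apply a ha z
    have hσmp : MeasurePreserving σ
        (MeasureTheory.volume : Measure (EuclideanSpace ℝ (Fin N))) MeasureTheory.volume := by
      have h := (reflectLIE a ha).measurePreserving
      rwa [hco] at h
    have hσemb : MeasurableEmbedding σ := by
      have h := (reflectLIE a ha).toMeasurableEquiv.measurableEmbedding
      rwa [show ⇑(reflectLIE a ha).toMeasurableEquiv = σ from hco] at h
    have hBA : B = σ '' A := by
      ext y
      constructor
      · rintro ⟨hy, hy2⟩
        refine ⟨σ y, ⟨hσD y hy, ?_⟩, reflect_involutive a y ha⟩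
        show 0 < ⟪a, reflectHyp0 a y⟫
        rw [reflect_inner_left a y ha]
        exact neg_pos.2 hy2
      · rintro ⟨z, ⟨hz, hz2⟩, rfl⟩
        refine ⟨hσD z hz, ?_⟩
        show ⟪a, reflectHyp0 a z⟫ < 0
        rw [reflect_inner_left a z ha]
        exact neg_lt_zero.2 hz2
    have e3 : ∫ y in B, u y * ⟪a, y⟫ = ∫ y in A, -(u (σ y) * ⟪a, y⟫) := by
      rw [hBA, hσmp.setIntegral_image_emb hσemb]
      congr 1
      funext y
      rw [hσ, reflect_inner_left a y ha]
      ring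
    have e4 : (∫ y in A, u y * ⟪a, y⟫) + ∫ y in A, -(u (σ y) * ⟪a, y⟫) = ∫ y in A, g y := by
      rw [← integral_add (hint_f.mono_set Set.inter_subset_left)
        (hint_fσ.mono_set Set.inter_subset_left)]
      congr 1
      funext y
      rw [hg]
      ring
    rw [e1, e2, e3, e4]
  -- sign
  have hgle : ∀ y ∈ A, g y ≤ 0 := by
    rintro y ⟨hy, hy2⟩
    have := h2 y hy hy2
    have h3 : u y - u (σ y) ≤ 0 := by rw [hσ]; linarith
    exact mul_nonpos_of_nonpos_of_nonneg h3 (le_of_lt hy2)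
  have hIle : ∫ y in A, g y ≤ 0 :=
    setIntegral_nonpos hAm hgle
  have hIzero : ∫ y in A, g y = 0 := le_antisymm hIle (key_eq ▸ hm)
  -- a.e. zero
  have hgA_int : IntegrableOn g A := hint_g.mono_set Set.inter_subset_left
  have hae : (MeasureTheory.volume.restrict A) {y | g y ≠ 0} = 0 := by
    have hng : (0 : EuclideanSpace ℝ (Fin N) → ℝ) ≤ᵐ[MeasureTheory.volume.restrict A]
        fun y => -g y := by
      refine (MeasureTheory.ae_restrict_iff' hAm).2 (Filter.Eventually.of_forall ?_)
      intro y hy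
      simp only [Pi.zero_apply, neg_nonneg]
      exact hgle y hy
    have hint' : MeasureTheory.Integrable (fun y => -g y) (MeasureTheory.volume.restrict A) :=
      hgA_int.neg
    have hzero : ∫ y in A, -g y = 0 := by
      rw [integral_neg, hIzero, neg_zero]
    have := (MeasureTheory.integral_eq_zero_iff_of_nonneg_ae hng hint').1 hzero
    rw [Filter.EventuallyEq, MeasureTheory.ae_iff] at this
    convert this using 2
    ext y
    simp
  -- pointwise zero on interior
  have hzero_int : ∀ y : EuclideanSpace ℝ (Fin N), ‖y‖ < R → 0 < ⟪a, y⟫ → g y = 0 := by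
    intro y hy hy2
    by_contra hgy
    set W : Set (EuclideanSpace ℝ (Fin N)) := Metric.ball 0 R ∩ {z | 0 < ⟪a, z⟫} with hW
    have hWo : IsOpen W := Metric.isOpen_ball.inter (isOpen_lt continuous_const hinner_cont)
    have hWD : W ⊆ D := fun z hz => Metric.ball_subset_closedBall hz.1
    set V : Set (EuclideanSpace ℝ (Fin N)) := W ∩ g ⁻¹' {(0:ℝ)}ᶜ with hV
    have hVo : IsOpen V := (hcg.mono hWD).isOpen_inter_preimage hWo isOpen_compl_singleton
    have hyV : y ∈ V := by
      refine ⟨⟨?_, hy2⟩, hgy⟩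
      rw [Metric.mem_ball, dist_zero_right]; exact hy
    have hVpos : 0 < MeasureTheory.volume V := hVo.measure_pos _ ⟨y, hyV⟩
    have hVA : V ⊆ A := fun z hz => ⟨Metric.ball_subset_closedBall hz.1.1, hz.1.2⟩
    have hVg : V ⊆ {z | g z ≠ 0} := fun z hz => hz.2
    have : MeasureTheory.volume V ≤ 0 := by
      calc MeasureTheory.volume V = (MeasureTheory.volume.restrict A) V := by
            rw [MeasureTheory.Measure.restrict_apply hVo.measurableSet,
              Set.inter_eq_left.2 hVA]
        _ ≤ (MeasureTheory.volume.restrict A) {z | g z ≠ 0} := measure_mono hVg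
        _ = 0 := hae
    exact absurd this (by simpa using hVpos.ne')
  -- pointwise zero everywhere
  have hzero_all : ∀ y ∈ D, 0 < ⟪a, y⟫ → g y = 0 := by
    intro y hy hy2
    rcases lt_or_eq_of_le (mem_closedBall_zero_iff.1 hy) with hlt | heq
    · exact hzero_int y hlt hy2
    · -- boundary point : approach along the segment
      have hy0 : y ≠ 0 := by
        intro h0
        rw [h0, inner_zero_right] at hy2
        exact lt_irrefl 0 hy2
      have hcont_path : ContinuousOn (fun t : ℝ => g (t • y)) (Set.Icc (1/2 : ℝ) 1) := by
        apply hcg.comp (Continuous.continuousOn (by fun_prop))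
        intro t ht
        rw [hD, mem_closedBall_zero_iff, norm_smul]
        have h1 : |t| ≤ 1 := abs_le.2 ⟨by linarith [ht.1], ht.2⟩
        calc ‖t‖ * ‖y‖ ≤ 1 * ‖y‖ := by
              apply mul_le_mul_of_nonneg_right _ (norm_nonneg y)
              simpa using h1
          _ = ‖y‖ := one_mul _
          _ ≤ R := mem_closedBall_zero_iff.1 hy
      have hzero_path : ∀ t ∈ Set.Ico (1/2 : ℝ) 1, g (t • y) = 0 := by
        intro t ht
        apply hzero_int
        · rw [norm_smul, ← heq]
          have hy0' : 0 < ‖y‖ := norm_pos_iff.2 hy0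
          have : ‖t‖ < 1 := by
            rw [Real.norm_eq_abs, abs_lt]; constructor <;> linarith [ht.1, ht.2]
          nlinarith
        · rw [real_inner_smul_right]
          exact mul_pos (by linarith [ht.1]) hy2
      have h1cl : (1:ℝ) ∈ closure (Set.Ico (1/2 : ℝ) 1) := by
        rw [closure_Ico (by norm_num : (1/2:ℝ) ≠ 1)]
        exact ⟨by norm_num, le_refl 1⟩
      have hne : (nhdsWithin (1:ℝ) (Set.Ico (1/2 : ℝ) 1)).NeBot :=
        mem_closure_iff_nhdsWithin_neBot.1 h1cl
      have htend1 : Filter.Tendsto (fun t : ℝ => g (t • y))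
          (nhdsWithin (1:ℝ) (Set.Ico (1/2 : ℝ) 1)) (nhds (g y)) := by
        have h1m : (1:ℝ) ∈ Set.Icc (1/2 : ℝ) 1 := ⟨by norm_num, le_refl 1⟩
        have := (hcont_path 1 h1m).tendsto
        simp only [one_smul] at this
        exact this.mono_left (nhdsWithin_mono _ Set.Ico_subset_Icc_self)
      have htend2 : Filter.Tendsto (fun t : ℝ => g (t • y))
          (nhdsWithin (1:ℝ) (Set.Ico (1/2 : ℝ) 1)) (nhds 0) := by
        apply Filter.Tendsto.congr' _ tendsto_const_nhds
        filter_upwards [self_mem_nhdsWithin] with t ht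
        exact (hzero_path t ht).symm
      exact tendsto_nhds_unique htend1 htend2
  -- conclude
  have hgx : g x = 0 := hzero_all x hx hax
  rw [hg] at hgx
  rcases mul_eq_zero.1 hgx with h | h
  · rw [hσ] at h; linarith [sub_eq_zero.1 h]
  · exact absurd h (ne_of_gt hax)

lemma eq_lemma (hR : 0 < R)
    (hcont : ContinuousOn u (Metric.closedBall (0 : EuclideanSpace ℝ (Fin N)) R))
    (hsep : ∀ a : EuclideanSpace ℝ (Fin N), a ≠ 0 →
      (∀ x ∈ Metric.closedBall (0 : EuclideanSpace ℝ (Fin N)) R,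
        0 < ⟪a, x⟫ → u (reflectHyp0 a x) ≤ u x) ∨
      (∀ x ∈ Metric.closedBall (0 : EuclideanSpace ℝ (Fin N)) R,
        0 < ⟪a, x⟫ → u x ≤ u (reflectHyp0 a x)))
    {a : EuclideanSpace ℝ (Fin N)} (ha : a ≠ 0)
    (hm : ⟪a, ∫ x in Metric.closedBall (0 : EuclideanSpace ℝ (Fin N)) R, u x • x⟫ = 0)
    {x : EuclideanSpace ℝ (Fin N)} (hx : x ∈ Metric.closedBall (0 : EuclideanSpace ℝ (Fin N)) R) :
    u (reflectHyp0 a x) = u x := by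
  have hna : -a ≠ 0 := neg_ne_zero.2 ha
  have hmn : (0:ℝ) ≤ ⟪-a, ∫ x in Metric.closedBall (0 : EuclideanSpace ℝ (Fin N)) R, u x • x⟫ := by
    rw [inner_neg_left, hm, neg_zero]
  have hxσ : reflectHyp0 a x ∈ Metric.closedBall (0 : EuclideanSpace ℝ (Fin N)) R := by
    rw [mem_closedBall_zero_iff] at hx ⊢
    rw [reflect_norm]; exact hx
  rcases lt_trichotomy (⟪a, x⟫ : ℝ) 0 with h | h | h
  · have h1 : 0 < ⟪-a, x⟫ := by rw [inner_neg_left]; linarith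
    have hle1 : u (reflectHyp0 (-a) x) ≤ u x := key_lemma hR hcont hsep hna hmn hx h1
    rw [reflect_neg] at hle1
    have h2 : 0 < ⟪a, reflectHyp0 a x⟫ := by rw [reflect_inner_left a x ha]; linarith
    have hle2 : u (reflectHyp0 a (reflectHyp0 a x)) ≤ u (reflectHyp0 a x) :=
      key_lemma hR hcont hsep ha hm.ge hxσ h2
    rw [reflect_involutive a x ha] at hle2
    linarith
  · rw [reflect_eq_self h]
  · have hle1 : u (reflectHyp0 a x) ≤ u x := key_lemma hR hcont hsep ha hm.ge hx h
    have h2 : 0 < ⟪-a, reflectHyp0 a x⟫ := by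
      rw [inner_neg_left, reflect_inner_left a x ha]; linarith
    have hle2 : u (reflectHyp0 (-a) (reflectHyp0 a x)) ≤ u (reflectHyp0 a x) :=
      key_lemma hR hcont hsep hna hmn hxσ h2
    rw [reflect_neg, reflect_involutive a x ha] at hle2
    linarith

end Key

/-- A continuous, positive, separable function on the closed ball `B_R`
which is not radially symmetric about the origin is, after an orthogonal change of
coordinates `M`, axially symmetric with respect to the `x_N`-axis (constant on every
set `{|x| = α, x_N = h}`) and, on each sphere of radius `α ∈ (0,R]`,
`θ ↦ u_M(0,…,0, α cos θ, α sin θ)` is nonincreasing on `[π/2, 3π/2]`. -/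
theorem stmt_9 (N : ℕ) (hN : 2 ≤ N) (R : ℝ) (hR : 0 < R)
    (u : EuclideanSpace ℝ (Fin N) → ℝ)
    (hcont : ContinuousOn u (Metric.closedBall (0 : EuclideanSpace ℝ (Fin N)) R))
    (hpos : ∀ x ∈ Metric.closedBall (0 : EuclideanSpace ℝ (Fin N)) R, 0 < u x)
    (hsep : ∀ a : EuclideanSpace ℝ (Fin N), a ≠ 0 →
      (∀ x ∈ Metric.closedBall (0 : EuclideanSpace ℝ (Fin N)) R,
        0 < ⟪a, x⟫ → u (reflectHyp0 a x) ≤ u x) ∨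
      (∀ x ∈ Metric.closedBall (0 : EuclideanSpace ℝ (Fin N)) R,
        0 < ⟪a, x⟫ → u x ≤ u (reflectHyp0 a x)))
    (hnotrad : ∃ x ∈ Metric.closedBall (0 : EuclideanSpace ℝ (Fin N)) R,
        ∃ y ∈ Metric.closedBall (0 : EuclideanSpace ℝ (Fin N)) R,
          ‖x‖ = ‖y‖ ∧ u x ≠ u y) :
    ∃ M : EuclideanSpace ℝ (Fin N) ≃ₗᵢ[ℝ] EuclideanSpace ℝ (Fin N),
      (∀ α ∈ Set.Ioc (0 : ℝ) R, ∀ h ∈ Set.Icc (-α) α,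
        ∀ x y : EuclideanSpace ℝ (Fin N), ‖x‖ = α → ‖y‖ = α →
          x ⟨N - 1, by omega⟩ = h → y ⟨N - 1, by omega⟩ = h →
          u (M.symm x) = u (M.symm y)) ∧
      (∀ α ∈ Set.Ioc (0 : ℝ) R,
        AntitoneOn (fun θ => u (M.symm (α • circlePoint N θ)))
          (Set.Icc (Real.pi / 2) (3 * Real.pi / 2))) := by
  classical
  set m : EuclideanSpace ℝ (Fin N) :=
    ∫ x in Metric.closedBall (0 : EuclideanSpace ℝ (Fin N)) R, u x • x with hmdef
  have hm0 : m ≠ 0 := by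
    intro h0
    obtain ⟨x, hx, y, hy, hnorm, hne⟩ := hnotrad
    have hxy : x ≠ y := fun hc => hne (by rw [hc])
    have ha : x - y ≠ 0 := sub_ne_zero.2 hxy
    have hmz : ⟪x - y,
        ∫ x in Metric.closedBall (0 : EuclideanSpace ℝ (Fin N)) R, u x • x⟫ = (0:ℝ) := by
      rw [← hmdef, h0, inner_zero_right]
    have heq := eq_lemma hR hcont hsep ha hmz hx
    rw [reflect_map_of_norm_eq hnorm hxy] at heq
    exact hne heq.symm
  have hmpos : 0 < ‖m‖ := norm_pos_iff.2 hm0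
  set p : EuclideanSpace ℝ (Fin N) := ‖m‖⁻¹ • m with hpdef
  have hp1 : ‖p‖ = 1 := by
    rw [hpdef, norm_smul, norm_inv, norm_norm, inv_mul_cancel₀ hmpos.ne']
  set i1 : Fin N := (⟨N - 1, by omega⟩ : Fin N) with hi1def
  set e : EuclideanSpace ℝ (Fin N) := EuclideanSpace.single i1 (1:ℝ) with hedef
  have he1 : ‖e‖ = 1 := by rw [hedef, EuclideanSpace.norm_single]; norm_num
  obtain ⟨M, hMe⟩ : ∃ M : EuclideanSpace ℝ (Fin N) ≃ₗᵢ[ℝ] EuclideanSpace ℝ (Fin N),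
      M.symm e = p := by
    by_cases hpe : p = e
    · exact ⟨LinearIsometryEquiv.refl ℝ _, hpe.symm⟩
    · refine ⟨reflectLIE (p - e) (sub_ne_zero.2 hpe), ?_⟩
      rw [reflectLIE_symm_apply]
      have h1 : reflectHyp0 (p - e) p = e :=
        reflect_map_of_norm_eq (by rw [hp1, he1]) hpe
      calc reflectHyp0 (p - e) e = reflectHyp0 (p - e) (reflectHyp0 (p - e) p) := by rw [h1]
        _ = p := reflect_involutive _ _ (sub_ne_zero.2 hpe)
  have him : ∀ b : EuclideanSpace ℝ (Fin N), ⟪b, m⟫ = ‖m‖ * ⟪b, p⟫ := by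
    intro b
    rw [hpdef, real_inner_smul_right, ← mul_assoc, mul_inv_cancel₀ hmpos.ne', one_mul]
  have keyP : ∀ a : EuclideanSpace ℝ (Fin N), a ≠ 0 → 0 ≤ ⟪a, p⟫ →
      ∀ z ∈ Metric.closedBall (0 : EuclideanSpace ℝ (Fin N)) R,
        0 < ⟪a, z⟫ → u (reflectHyp0 a z) ≤ u z := by
    intro a ha hap z hz haz
    refine key_lemma hR hcont hsep ha ?_ hz haz
    rw [← hmdef, him a]
    exact mul_nonneg hmpos.le hap
  have eqP : ∀ a : EuclideanSpace ℝ (Fin N), a ≠ 0 → ⟪a, p⟫ = 0 →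
      ∀ z ∈ Metric.closedBall (0 : EuclideanSpace ℝ (Fin N)) R,
        u (reflectHyp0 a z) = u z := by
    intro a ha hap z hz
    refine eq_lemma hR hcont hsep ha ?_ hz
    rw [← hmdef, him a, hap, mul_zero]
  have hinnerP : ∀ z : EuclideanSpace ℝ (Fin N), ⟪M.symm z, p⟫ = ⟪z, e⟫ := by
    intro z
    rw [← hMe, LinearIsometryEquiv.inner_map_map]
  have hcoord : ∀ z : EuclideanSpace ℝ (Fin N), ⟪z, e⟫ = z i1 := by
    intro z
    rw [real_inner_comm, hedef, EuclideanSpace.inner_single_left]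
    simp
  refine ⟨M, ?_, ?_⟩
  · rintro α ⟨hα0, hαR⟩ h hh x y hxn hyn hxc hyc
    by_cases hxy : M.symm x = M.symm y
    · rw [hxy]
    have hnorm' : ‖M.symm x‖ = ‖M.symm y‖ := by
      rw [LinearIsometryEquiv.norm_map, LinearIsometryEquiv.norm_map, hxn, hyn]
    have ha : M.symm x - M.symm y ≠ 0 := sub_ne_zero.2 hxy
    have hap : ⟪M.symm x - M.symm y, p⟫ = 0 := by
      rw [inner_sub_left, hinnerP, hinnerP, hcoord, hcoord]
      rw [hi1def] at *
      rw [hxc, hyc, sub_self]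
    have hxD : M.symm x ∈ Metric.closedBall (0 : EuclideanSpace ℝ (Fin N)) R := by
      rw [mem_closedBall_zero_iff, LinearIsometryEquiv.norm_map, hxn]
      exact hαR
    have heq := eqP _ ha hap (M.symm x) hxD
    rw [reflect_map_of_norm_eq hnorm' hxy] at heq
    exact heq.symm
  · rintro α ⟨hα0, hαR⟩ θ₁ hθ₁ θ₂ hθ₂ hle
    simp only
    by_cases hz : M.symm (α • circlePoint N θ₁) = M.symm (α • circlePoint N θ₂)
    · rw [hz]
    have hn1 : ‖M.symm (α • circlePoint N θ₁)‖ = α := by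
      rw [LinearIsometryEquiv.norm_map, norm_smul, norm_circlePoint hN, Real.norm_eq_abs,
        abs_of_pos hα0, mul_one]
    have hn2 : ‖M.symm (α • circlePoint N θ₂)‖ = α := by
      rw [LinearIsometryEquiv.norm_map, norm_smul, norm_circlePoint hN, Real.norm_eq_abs,
        abs_of_pos hα0, mul_one]
    have hnorm' : ‖M.symm (α • circlePoint N θ₁)‖ = ‖M.symm (α • circlePoint N θ₂)‖ := by
      rw [hn1, hn2]
    have hsin : Real.sin θ₂ ≤ Real.sin θ₁ := by
      have h1 : Real.cos (θ₂ - Real.pi/2) ≤ Real.cos (θ₁ - Real.pi/2) :=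
        Real.cos_le_cos_of_nonneg_of_le_pi (by linarith [hθ₁.1]) (by linarith [hθ₂.2])
          (by linarith)
      rwa [show θ₁ - Real.pi/2 = -(Real.pi/2 - θ₁) by ring,
        show θ₂ - Real.pi/2 = -(Real.pi/2 - θ₂) by ring, Real.cos_neg, Real.cos_neg,
        Real.cos_pi_div_two_sub, Real.cos_pi_div_two_sub] at h1
    have hap : 0 ≤ ⟪M.symm (α • circlePoint N θ₁) - M.symm (α • circlePoint N θ₂), p⟫ := by
      rw [inner_sub_left, hinnerP, hinnerP]
      have hc : ∀ θ : ℝ, ⟪α • circlePoint N θ, e⟫ = α * Real.sin θ := by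
        intro θ
        rw [real_inner_smul_left, hedef, real_inner_comm, hi1def,
          inner_single_circlePoint hN]
      rw [hc, hc, sub_nonneg]
      exact mul_le_mul_of_nonneg_left hsin hα0.le
    have hzD : M.symm (α • circlePoint N θ₁) ∈
        Metric.closedBall (0 : EuclideanSpace ℝ (Fin N)) R := by
      rw [mem_closedBall_zero_iff, hn1]; exact hαR
    have hkey := keyP _ (sub_ne_zero.2 hz) hap (M.symm (α • circlePoint N θ₁)) hzD
      (reflect_inner_pos hnorm' hz)
    rwa [reflect_map_of_norm_eq hnorm' hz] at hkey
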